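/- arXiv:1903.04234 — 2 statements merged into one kernel-verified Lean document; each statement's English description precedes it below -/
import Mathlib

section
/- Let $f \in H^k(\Omega_1\times\dots\times\Omega_m)$ and choose ranks $r_j = \lceil \varepsilon^{-n_j/k}\rceil$ for $j=1,\dots,m$. Then the truncated Tucker decomposition satisfies $\|f - f^{TF}_{r_1,\dots,r_m}\|_{L^2(\Omega_1\times\dots\times\Omega_m)} \lesssim \sqrt{m}\,\varepsilon\, |f|_{H^k}$, while the number of entries in the core tensor is $\prod_{j=1}^m r_j \sim \varepsilon^{-(n_1+\dots+n_m)/k}$. -/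
/-!
STATEMENT 11: Tucker decomposition with ranks `r_j = ⌈ε^{-n_j/k}⌉`:
`‖f - f^{TF}‖_{L²} ≲ √m ε |f|_{H^k}` and the core tensor size satisfies
`∏_j r_j ∼ ε^{-(n_1+⋯+n_m)/k}`.
The singular-value tail bound of each matricization (the SVD truncation
theorem) and the Tucker error bound (Statement 10) enter as hypotheses.
-/

open MeasureTheory Real
noncomputable section

abbrev Euc (n : ℕ) := EuclideanSpace ℝ (Fin n)

def matProj {m : ℕ} {n : Fin m → ℕ} (Ω : Π j, Set (Euc (n j)))
    (φ : Π j, ℕ → Euc (n j) → ℝ) (j : Fin m) (r : ℕ)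
    (f : (Π i, Euc (n i)) → ℝ) : (Π i, Euc (n i)) → ℝ :=
  fun x => ∑ α ∈ Finset.range r,
    φ j α (x j) * ∫ t in Ω j, f (Function.update x j t) * φ j α t

def tucker {m : ℕ} {n : Fin m → ℕ} (Ω : Π j, Set (Euc (n j)))
    (φ : Π j, ℕ → Euc (n j) → ℝ) (r : Fin m → ℕ)
    (f : (Π i, Euc (n i)) → ℝ) : (Π i, Euc (n i)) → ℝ :=
  fun x => ∑ α ∈ Fintype.piFinset (fun j => Finset.range (r j)),
    (∫ t in Set.univ.pi Ω, f t * ∏ j, φ j (α j) (t j)) * ∏ j, φ j (α j) (x j)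

/-- squared `H^k`-seminorm on the product domain. -/
def sobSemiSq {X : Type*} [NormedAddCommGroup X] [NormedSpace ℝ X] [MeasureSpace X]
    (k : ℕ) (Ω : Set X) (f : X → ℝ) : ℝ :=
  ∫ x in Ω, ‖iteratedFDeriv ℝ k f x‖ ^ 2

theorem stmt11 (m k : ℕ) (hm : 1 ≤ m) (hk : 1 ≤ k) (n : Fin m → ℕ)
    (hn : ∀ j, 1 ≤ n j) (Ω : Π j, Set (Euc (n j)))
    (hΩo : ∀ j, IsOpen (Ω j)) (hΩb : ∀ j, Bornology.IsBounded (Ω j))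
    (hΩc : ∀ j, Convex ℝ (Ω j))
    (f : (Π i, Euc (n i)) → ℝ) (hf : ContDiff ℝ k f)
    (φ : Π j, ℕ → Euc (n j) → ℝ)
    (hON : ∀ j α β, (∫ t in Ω j, φ j α t * φ j β t) = if α = β then (1 : ℝ) else 0)
    (lam : Fin m → ℕ → ℝ)
    (hlam0 : ∀ j α, 0 ≤ lam j α) (hlamA : ∀ j, Antitone (lam j))
    (hsum : ∀ j, Summable (lam j))
    (c : ℝ) (hc : 0 < c)
    -- tail bound for the singular values of each matricization
    (htail : ∀ j (R : ℕ), 1 ≤ R →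
      Real.sqrt (∑' α : ℕ, lam j (R + α)) ≤
        c * (R : ℝ) ^ (-(k : ℝ) / (n j)) *
          Real.sqrt (sobSemiSq k (Set.univ.pi Ω) f))
    -- Tucker error bound (Statement 10)
    (herr : ∀ r : Fin m → ℕ,
      (∫ x in Set.univ.pi Ω, (f x - tucker Ω φ r f x) ^ 2) ≤
        ∑ j : Fin m, ∑' α : ℕ, lam j (r j + α)) :
    ∃ C : ℝ, 0 < C ∧ ∀ ε : ℝ, 0 < ε → ε ≤ 1 →
      Real.sqrt (∫ x in Set.univ.pi Ω,
          (f x - tucker Ω φ (fun j => ⌈ε ^ (-(n j : ℝ) / k)⌉₊) f x) ^ 2) ≤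
        C * Real.sqrt m * ε * Real.sqrt (sobSemiSq k (Set.univ.pi Ω) f) ∧
      C⁻¹ * ε ^ (-(∑ j : Fin m, (n j : ℝ)) / k) ≤
        (∏ j : Fin m, (⌈ε ^ (-(n j : ℝ) / k)⌉₊ : ℝ)) ∧
      (∏ j : Fin m, (⌈ε ^ (-(n j : ℝ) / k)⌉₊ : ℝ)) ≤
        C * ε ^ (-(∑ j : Fin m, (n j : ℝ)) / k) := by
  set S := Real.sqrt (sobSemiSq k (Set.univ.pi Ω) f) with hSdef
  have hS0 : 0 ≤ S := Real.sqrt_nonneg _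
  have hkR : (0:ℝ) < k := by exact_mod_cast hk
  refine ⟨(max c 1) * 2 ^ m, by positivity, fun ε hε hε1 => ?_⟩
  set C := (max c 1) * 2 ^ m with hCdef
  have hC1 : (1:ℝ) ≤ C := by
    calc (1:ℝ) = 1 * 1 := by ring
    _ ≤ (max c 1) * 2 ^ m := by
      apply mul_le_mul (le_max_right _ _) (one_le_pow₀ (by norm_num)) zero_le_one
        (le_trans zero_le_one (le_max_right _ _))
  have hC0 : (0:ℝ) < C := lt_of_lt_of_le one_pos hC1
  set x : Fin m → ℝ := fun j => ε ^ (-(n j : ℝ) / k) with hxdef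
  have hx1 : ∀ j, 1 ≤ x j := fun j =>
    Real.one_le_rpow_of_pos_of_le_one_of_nonpos hε hε1
      (div_nonpos_of_nonpos_of_nonneg (neg_nonpos.2 (Nat.cast_nonneg _)) hkR.le)
  have hx0 : ∀ j, 0 < x j := fun j => lt_of_lt_of_le one_pos (hx1 j)
  set r : Fin m → ℕ := fun j => ⌈x j⌉₊ with hrdef
  have hr1 : ∀ j, 1 ≤ r j := fun j => Nat.one_le_ceil_iff.2 (hx0 j)
  have hxr : ∀ j, x j ≤ (r j : ℝ) := fun j => Nat.le_ceil _
  have hr2 : ∀ j, (r j : ℝ) ≤ 2 * x j := fun j => by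
    have := Nat.ceil_lt_add_one (hx0 j).le
    nlinarith [hx1 j]
  have hnR : ∀ j, (0:ℝ) < n j := fun j => by exact_mod_cast hn j
  -- each rank power is at most ε
  have hrpow : ∀ j, (r j : ℝ) ^ (-(k : ℝ) / (n j)) ≤ ε := by
    intro j
    have h1 : (r j : ℝ) ^ (-(k : ℝ) / (n j)) ≤ (x j) ^ (-(k : ℝ) / (n j)) :=
      Real.rpow_le_rpow_of_nonpos (hx0 j) (hxr j)
        (div_nonpos_of_nonpos_of_nonneg (neg_nonpos.2 (Nat.cast_nonneg _)) (hnR j).le)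
    have h2 : (x j) ^ (-(k : ℝ) / (n j)) = ε := by
      show (ε ^ (-(n j : ℝ) / k)) ^ (-(k : ℝ) / (n j)) = ε
      rw [← Real.rpow_mul hε.le]
      have hne1 : (k : ℝ) ≠ 0 := hkR.ne'
      have hne2 : ((n j) : ℝ) ≠ 0 := (hnR j).ne'
      rw [show (-(n j : ℝ) / k) * (-(k : ℝ) / (n j)) = 1 by field_simp, Real.rpow_one]
    linarith
  -- tail bound
  have htail' : ∀ j : Fin m, (∑' α : ℕ, lam j (r j + α)) ≤ (c * ε * S) ^ 2 := by
    intro j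
    have h0 : 0 ≤ ∑' α : ℕ, lam j (r j + α) := tsum_nonneg fun α => hlam0 j _
    have h1 := htail j (r j) (hr1 j)
    have h2 : c * (r j : ℝ) ^ (-(k : ℝ) / (n j)) * S ≤ c * ε * S := by
      apply mul_le_mul_of_nonneg_right _ hS0
      exact mul_le_mul_of_nonneg_left (hrpow j) hc.le
    have h3 : Real.sqrt (∑' α : ℕ, lam j (r j + α)) ≤ c * ε * S := h1.trans h2
    calc (∑' α : ℕ, lam j (r j + α))
        = Real.sqrt (∑' α : ℕ, lam j (r j + α)) ^ 2 := (Real.sq_sqrt h0).symm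
      _ ≤ (c * ε * S) ^ 2 := by
          apply pow_le_pow_left₀ (Real.sqrt_nonneg _) h3 2
  -- error bound
  have hInt : (∫ x in Set.univ.pi Ω, (f x - tucker Ω φ r f x) ^ 2) ≤
      (m : ℝ) * (c * ε * S) ^ 2 := by
    refine (herr r).trans ?_
    calc ∑ j : Fin m, ∑' α : ℕ, lam j (r j + α)
        ≤ ∑ _j : Fin m, (c * ε * S) ^ 2 := Finset.sum_le_sum fun j _ => htail' j
      _ = (m : ℝ) * (c * ε * S) ^ 2 := by simp [mul_comm]
  refine ⟨?_, ?_, ?_⟩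
  · calc Real.sqrt (∫ x in Set.univ.pi Ω, (f x - tucker Ω φ r f x) ^ 2)
        ≤ Real.sqrt ((m : ℝ) * (c * ε * S) ^ 2) := Real.sqrt_le_sqrt hInt
      _ = Real.sqrt m * (c * ε * S) := by
          rw [Real.sqrt_mul (by positivity), Real.sqrt_sq (by positivity)]
      _ = c * Real.sqrt m * ε * S := by ring
      _ ≤ C * Real.sqrt m * ε * S := by
          have hcC : c ≤ C := by
            calc c = c * 1 := by ring
            _ ≤ (max c 1) * 2 ^ m :=
              mul_le_mul (le_max_left _ _) (one_le_pow₀ (by norm_num)) zero_le_one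
                (le_trans hc.le (le_max_left _ _))
          have : (0:ℝ) ≤ Real.sqrt m * ε * S := by positivity
          nlinarith
  · have hprodx : ∏ j : Fin m, x j = ε ^ (-(∑ j : Fin m, (n j : ℝ)) / k) := by
      rw [hxdef]
      rw [← Real.rpow_sum_of_pos hε]
      congr 1
      rw [← Finset.sum_div, ← Finset.sum_neg_distrib]
    calc C⁻¹ * ε ^ (-(∑ j : Fin m, (n j : ℝ)) / k)
        ≤ 1 * ε ^ (-(∑ j : Fin m, (n j : ℝ)) / k) := by
          apply mul_le_mul_of_nonneg_right _ (Real.rpow_nonneg hε.le _)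
          exact inv_le_one_of_one_le₀ hC1
      _ = ∏ j : Fin m, x j := by rw [one_mul, hprodx]
      _ ≤ ∏ j : Fin m, (r j : ℝ) :=
          Finset.prod_le_prod (fun j _ => (hx0 j).le) (fun j _ => hxr j)
  · have hprodx : ∏ j : Fin m, x j = ε ^ (-(∑ j : Fin m, (n j : ℝ)) / k) := by
      rw [hxdef]
      rw [← Real.rpow_sum_of_pos hε]
      congr 1
      rw [← Finset.sum_div, ← Finset.sum_neg_distrib]
    calc ∏ j : Fin m, (r j : ℝ)
        ≤ ∏ j : Fin m, (2 * x j) :=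
          Finset.prod_le_prod (fun j _ => (Nat.cast_nonneg _)) (fun j _ => hr2 j)
      _ = 2 ^ m * ∏ j : Fin m, x j := by
          rw [Finset.prod_mul_distrib]; simp
      _ ≤ C * ε ^ (-(∑ j : Fin m, (n j : ℝ)) / k) := by
          rw [hprodx]
          apply mul_le_mul_of_nonneg_right _ (Real.rpow_nonneg hε.le _)
          calc (2:ℝ) ^ m = 1 * 2 ^ m := by ring
          _ ≤ (max c 1) * 2 ^ m :=
            mul_le_mul_of_nonneg_right (le_max_right _ _) (by positivity)
end
end

section
/- Fix $\delta > 0$ and $\delta' > \delta + k/n$, and assume the weighted smoothness tail bounds $\big(\sum_{\alpha > r_j}\lambda_j(\alpha)\big)^{1/2} \le C\, r_j^{-k/n}\, \gamma_j^k\, \|f\|_{H^k(\Omega^m)}$ with weights $\gamma_j \le c\, j^{-(1+\delta')/k}$. Choose ranks $r_j = \lceil \gamma_j^n j^{(1+\delta)n/k} \varepsilon^{-n/k}\rceil$. Then the total Tucker truncation error satisfies $\big(\sum_{j=1}^m \sum_{\alpha_j > r_j}\lambda_j(\alpha_j)\big)^{1/2} \lesssim \varepsilon$ uniformly in $m$,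 and the core tensor cost $C_m := \prod_{j=1}^m r_j$ satisfies $\log C_m \lesssim \varepsilon^{-n/k}$ uniformly as $m \to \infty$. -/
/-!
The ranks are chosen so that `r_j^{-k/n} γ_j^k ≤ j^{-(1+δ)} ε`; hence the `j`-th tail is at most
`(C₀ ε F)² j^{-2(1+δ)}`, which is summable because `δ > 0`. For the cost, `log ⌈x⌉ ≤ x` bounds
`log r_j` by `γ_j^n j^{(1+δ)n/k} ε^{-n/k} ≤ c_γ^n j^{-θ} ε^{-n/k}` with `θ = (δ' - δ) n / k > 1`,
again a summable sequence times `ε^{-n/k}`.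
-/

noncomputable section

/-- the Tucker rank `r_j = ⌈γ_j^n j^{(1+δ)n/k} ε^{-n/k}⌉`. -/
def tuckerRank (γ : ℕ → ℝ) (n k : ℕ) (δ ε : ℝ) (j : ℕ) : ℕ :=
  ⌈γ j ^ n * (j : ℝ) ^ ((1 + δ) * n / k) * ε ^ (-(n : ℝ) / k)⌉₊

lemma Real.log_natCeil_le {x : ℝ} (hx : 0 < x) : Real.log ⌈x⌉₊ ≤ x := by
  have hceil_pos : (0 : ℝ) < ⌈x⌉₊ := by exact_mod_cast Nat.ceil_pos.mpr hx
  calc Real.log ⌈x⌉₊ ≤ Real.log (x + 1) :=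
        Real.log_le_log hceil_pos (Nat.ceil_lt_add_one hx.le).le
    _ ≤ x := by linarith [Real.log_le_sub_one_of_pos (by linarith : 0 < x + 1)]

section TuckerRank

variable (γ : ℕ → ℝ) (n k : ℕ) (δ ε : ℝ) (j : ℕ)

def tuckerRankReal : ℝ :=
  γ j ^ n * (j : ℝ) ^ ((1 + δ) * n / k) * ε ^ (-(n : ℝ) / k)

lemma tuckerRank_eq_ceil : tuckerRank γ n k δ ε j = ⌈tuckerRankReal γ n k δ ε j⌉₊ := rfl

variable {γ n k δ ε j}

lemma tuckerRankReal_pos (hγ : 0 < γ j) (hj : 1 ≤ j) (hε : 0 < ε) :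
    0 < tuckerRankReal γ n k δ ε j := by
  have hj0 : (0 : ℝ) < j := by exact_mod_cast hj
  unfold tuckerRankReal
  positivity

lemma one_le_tuckerRank (hγ : 0 < γ j) (hj : 1 ≤ j) (hε : 0 < ε) :
    1 ≤ tuckerRank γ n k δ ε j :=
  Nat.one_le_ceil_iff.mpr (tuckerRankReal_pos hγ hj hε)

lemma tuckerRankReal_rpow_neg (hn : n ≠ 0) (hk : k ≠ 0) (hγ : 0 < γ j) (hε : 0 < ε) :
    tuckerRankReal γ n k δ ε j ^ (-(k : ℝ) / n) = (γ j ^ k)⁻¹ * (j : ℝ) ^ (-(1 + δ)) * ε := by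
  have hj : (0 : ℝ) ≤ j := Nat.cast_nonneg j
  have hγn : (0 : ℝ) ≤ γ j ^ n := by positivity
  rw [tuckerRankReal, Real.mul_rpow (by positivity) (by positivity),
    Real.mul_rpow hγn (by positivity), ← Real.rpow_natCast (γ j) n, ← Real.rpow_mul hγ.le, ← Real.rpow_mul hj, ← Real.rpow_mul hε.le]
  have hn' : (n : ℝ) ≠ 0 := by exact_mod_cast hn
  have hk' : (k : ℝ) ≠ 0 := by exact_mod_cast hk
  have e_γ : (n : ℝ) * (-(k : ℝ) / n) = -(k : ℝ) := by field_simp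
  have e_j : (1 + δ) * n / k * (-(k : ℝ) / n) = -(1 + δ) := by field_simp
  have e_ε : -(n : ℝ) / k * (-(k : ℝ) / n) = 1 := by field_simp
  rw [e_γ, e_j, e_ε, Real.rpow_one, Real.rpow_neg hγ.le, Real.rpow_natCast]

lemma rpow_tuckerRank_mul_le (hn : n ≠ 0) (hk : k ≠ 0) (hγ : 0 < γ j) (hj : 1 ≤ j)
    (hε : 0 < ε) :
    (tuckerRank γ n k δ ε j : ℝ) ^ (-(k : ℝ) / n) * γ j ^ k ≤ (j : ℝ) ^ (-(1 + δ)) * ε := by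
  have hexp : -(k : ℝ) / n ≤ 0 := div_nonpos_of_nonpos_of_nonneg (by simp) (Nat.cast_nonneg n)
  calc (tuckerRank γ n k δ ε j : ℝ) ^ (-(k : ℝ) / n) * γ j ^ k
      ≤ tuckerRankReal γ n k δ ε j ^ (-(k : ℝ) / n) * γ j ^ k := by
        refine mul_le_mul_of_nonneg_right ?_ (by positivity)
        exact Real.rpow_le_rpow_of_nonpos (tuckerRankReal_pos hγ hj hε) (Nat.le_ceil _) hexp
    _ = (j : ℝ) ^ (-(1 + δ)) * ε := by
        rw [tuckerRankReal_rpow_neg hn hk hγ hε]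
        field_simp

lemma tail_tuckerRank_le {C₀ F : ℝ} {lam : ℕ → ℝ} (hn : n ≠ 0) (hk : k ≠ 0) (hC₀ : 0 ≤ C₀)
    (hF : 0 ≤ F) (hγ : 0 < γ j) (hj : 1 ≤ j) (hε : 0 < ε)
    (htail : ∀ r : ℕ, 1 ≤ r →
      Real.sqrt (∑' α : ℕ, lam (r + α)) ≤ C₀ * (r : ℝ) ^ (-(k : ℝ) / n) * γ j ^ k * F) :
    ∑' α : ℕ, lam (tuckerRank γ n k δ ε j + α) ≤
      (C₀ * ε * F) ^ 2 * (j : ℝ) ^ (-(2 * (1 + δ))) := by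
  have hj0 : (0 : ℝ) ≤ j := Nat.cast_nonneg j
  have hsqrt : Real.sqrt (∑' α : ℕ, lam (tuckerRank γ n k δ ε j + α)) ≤
      C₀ * ε * F * (j : ℝ) ^ (-(1 + δ)) :=
    calc _ ≤ C₀ * ((tuckerRank γ n k δ ε j : ℝ) ^ (-(k : ℝ) / n) * γ j ^ k) * F := by
          rw [← mul_assoc]; exact htail _ (one_le_tuckerRank hγ hj hε)
      _ ≤ C₀ * ((j : ℝ) ^ (-(1 + δ)) * ε) * F := by
          have h := rpow_tuckerRank_mul_le (δ := δ) hn hk hγ hj hε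
          exact mul_le_mul_of_nonneg_right (mul_le_mul_of_nonneg_left h hC₀) hF
      _ = C₀ * ε * F * (j : ℝ) ^ (-(1 + δ)) := by ring
  calc _ ≤ (C₀ * ε * F * (j : ℝ) ^ (-(1 + δ))) ^ 2 :=
        (Real.sqrt_le_left (by positivity)).mp hsqrt
    _ = (C₀ * ε * F) ^ 2 * (j : ℝ) ^ (-(2 * (1 + δ))) := by
        rw [mul_pow, ← Real.rpow_natCast ((j : ℝ) ^ _) 2, ← Real.rpow_mul hj0]
        congr 2
        push_cast
        ring

lemma sqrt_sum_tail_tuckerRank_le {C₀ F : ℝ} {lam : ℕ → ℕ → ℝ} (m : ℕ) (hn : n ≠ 0)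
    (hk : k ≠ 0) (hδ : 0 < δ) (hC₀ : 0 ≤ C₀) (hF : 0 ≤ F) (hγ : ∀ j, 0 < γ j) (hε : 0 < ε)
    (htail : ∀ j : ℕ, 1 ≤ j → j ≤ m → ∀ r : ℕ, 1 ≤ r →
      Real.sqrt (∑' α : ℕ, lam j (r + α)) ≤ C₀ * (r : ℝ) ^ (-(k : ℝ) / n) * γ j ^ k * F) :
    Real.sqrt (∑ j ∈ Finset.Icc 1 m, ∑' α : ℕ, lam j (tuckerRank γ n k δ ε j + α)) ≤
      C₀ * Real.sqrt (∑' j : ℕ, (j : ℝ) ^ (-(2 * (1 + δ)))) * (ε * F) := by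
  have hsummable : Summable fun j : ℕ ↦ (j : ℝ) ^ (-(2 * (1 + δ))) :=
    Real.summable_nat_rpow.mpr (by linarith)
  have hsum : ∑ j ∈ Finset.Icc 1 m, ∑' α : ℕ, lam j (tuckerRank γ n k δ ε j + α) ≤
      (C₀ * ε * F) ^ 2 * ∑' j : ℕ, (j : ℝ) ^ (-(2 * (1 + δ))) :=
    calc _ ≤ ∑ j ∈ Finset.Icc 1 m, (C₀ * ε * F) ^ 2 * (j : ℝ) ^ (-(2 * (1 + δ))) := by
          refine Finset.sum_le_sum fun j hj ↦ ?_
          obtain ⟨hj1, hjm⟩ := Finset.mem_Icc.mp hj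
          exact tail_tuckerRank_le hn hk hC₀ hF (hγ j) hj1 hε (htail j hj1 hjm)
      _ ≤ (C₀ * ε * F) ^ 2 * ∑' j : ℕ, (j : ℝ) ^ (-(2 * (1 + δ))) := by
          rw [← Finset.mul_sum]
          gcongr
          exact hsummable.sum_le_tsum _ fun j _ ↦ by positivity
  calc _ ≤ Real.sqrt ((C₀ * ε * F) ^ 2 * ∑' j : ℕ, (j : ℝ) ^ (-(2 * (1 + δ)))) :=
        Real.sqrt_le_sqrt hsum
    _ = C₀ * Real.sqrt (∑' j : ℕ, (j : ℝ) ^ (-(2 * (1 + δ)))) * (ε * F) := by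
        rw [Real.sqrt_mul (sq_nonneg _), Real.sqrt_sq (by positivity)]
        ring

lemma tuckerRankReal_le {δ' cγ : ℝ} (hk : k ≠ 0) (hγpos : 0 < γ j) (hj : 1 ≤ j) (hε : 0 < ε)
    (hγ : γ j ≤ cγ * (j : ℝ) ^ (-(1 + δ') / k)) :
    tuckerRankReal γ n k δ ε j ≤ cγ ^ n * (j : ℝ) ^ (-((δ' - δ) * n / k)) * ε ^ (-(n : ℝ) / k) := by
  have hj0 : (0 : ℝ) < j := by exact_mod_cast hj
  have hk' : (k : ℝ) ≠ 0 := by exact_mod_cast hk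
  have hexp : -(1 + δ') / k * n + (1 + δ) * n / k = -((δ' - δ) * n / k) := by
    field_simp
    ring
  calc tuckerRankReal γ n k δ ε j
      ≤ (cγ * (j : ℝ) ^ (-(1 + δ') / k)) ^ n * (j : ℝ) ^ ((1 + δ) * n / k) *
          ε ^ (-(n : ℝ) / k) := by
        unfold tuckerRankReal
        gcongr
    _ = cγ ^ n * (j : ℝ) ^ (-((δ' - δ) * n / k)) * ε ^ (-(n : ℝ) / k) := by
        rw [mul_pow, ← Real.rpow_natCast ((j : ℝ) ^ _), ← Real.rpow_mul hj0.le, mul_assoc (cγ ^ n),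
          ← Real.rpow_add hj0, hexp]

lemma log_prod_tuckerRank_le {δ' cγ : ℝ} (m : ℕ) (hn : n ≠ 0) (hk : k ≠ 0)
    (hδ' : δ + (k : ℝ) / n < δ') (hcγ : 0 ≤ cγ) (hγpos : ∀ j, 0 < γ j)
    (hγ : ∀ j : ℕ, 1 ≤ j → γ j ≤ cγ * (j : ℝ) ^ (-(1 + δ') / k)) (hε : 0 < ε) :
    Real.log (∏ j ∈ Finset.Icc 1 m, (tuckerRank γ n k δ ε j : ℝ)) ≤
      cγ ^ n * (∑' j : ℕ, (j : ℝ) ^ (-((δ' - δ) * n / k))) * ε ^ (-(n : ℝ) / k) := by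
  have hθ : 1 < (δ' - δ) * n / k := by
    have hn0 : (0 : ℝ) < n := by positivity
    have hk0 : (0 : ℝ) < k := by positivity
    rw [one_lt_div hk0, ← div_lt_iff₀ hn0]
    linarith
  have hsummable : Summable fun j : ℕ ↦ (j : ℝ) ^ (-((δ' - δ) * n / k)) :=
    Real.summable_nat_rpow.mpr (by linarith)
  have hne : ∀ j ∈ Finset.Icc 1 m, (tuckerRank γ n k δ ε j : ℝ) ≠ 0 := fun j hj ↦
    Nat.cast_ne_zero.mpr (Nat.one_le_iff_ne_zero.mp
      (one_le_tuckerRank (hγpos j) (Finset.mem_Icc.mp hj).1 hε))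
  rw [Real.log_prod hne]
  calc _ ≤ ∑ j ∈ Finset.Icc 1 m, cγ ^ n * (j : ℝ) ^ (-((δ' - δ) * n / k)) * ε ^ (-(n : ℝ) / k) := by
        refine Finset.sum_le_sum fun j hj ↦ ?_
        have hj1 := (Finset.mem_Icc.mp hj).1
        rw [tuckerRank_eq_ceil]
        exact (Real.log_natCeil_le (tuckerRankReal_pos (hγpos j) hj1 hε)).trans
          (tuckerRankReal_le hk (hγpos j) hj1 hε (hγ j hj1))
    _ = cγ ^ n * (∑ j ∈ Finset.Icc 1 m, (j : ℝ) ^ (-((δ' - δ) * n / k))) * ε ^ (-(n : ℝ) / k) := by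
        rw [Finset.mul_sum, Finset.sum_mul]
    _ ≤ cγ ^ n * (∑' j : ℕ, (j : ℝ) ^ (-((δ' - δ) * n / k))) * ε ^ (-(n : ℝ) / k) := by
        gcongr
        exact hsummable.sum_le_tsum _ fun j _ ↦ by positivity

end TuckerRank

theorem stmt12 (n k : ℕ) (hn : 1 ≤ n) (hk : 1 ≤ k)
    (δ δ' cγ C₀ F : ℝ) (hδ : 0 < δ) (hδ' : δ + (k : ℝ) / n < δ')
    (hcγ : 0 < cγ) (hC₀ : 0 < C₀) (hF : 0 ≤ F)
    (γ : ℕ → ℝ) (hγpos : ∀ j, 0 < γ j)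
    -- algebraically decaying weights
    (hγ : ∀ j : ℕ, 1 ≤ j → γ j ≤ cγ * (j : ℝ) ^ (-(1 + δ') / k)) :
    ∃ C : ℝ, 0 < C ∧
      ∀ m : ℕ, 1 ≤ m →
      ∀ lam : ℕ → ℕ → ℝ, (∀ j α, 0 ≤ lam j α) →
      (∀ j, Summable (lam j)) →
      -- weighted singular-value tail bounds of the matricizations
      (∀ j : ℕ, 1 ≤ j → j ≤ m → ∀ r : ℕ, 1 ≤ r →
        Real.sqrt (∑' α : ℕ, lam j (r + α)) ≤
          C₀ * (r : ℝ) ^ (-(k : ℝ) / n) * γ j ^ k * F) →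
      ∀ ε : ℝ, 0 < ε → ε ≤ 1 →
        Real.sqrt (∑ j ∈ Finset.Icc 1 m,
            ∑' α : ℕ, lam j (tuckerRank γ n k δ ε j + α)) ≤ C * ε * F ∧
        Real.log (∏ j ∈ Finset.Icc 1 m, (tuckerRank γ n k δ ε j : ℝ)) ≤
          C * ε ^ (-(n : ℝ) / k) := by
  have hn0 : n ≠ 0 := Nat.one_le_iff_ne_zero.mp hn
  have hk0 : k ≠ 0 := Nat.one_le_iff_ne_zero.mp hk
  set errorConst := C₀ * Real.sqrt (∑' j : ℕ, (j : ℝ) ^ (-(2 * (1 + δ))))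
  set costConst := cγ ^ n * ∑' j : ℕ, (j : ℝ) ^ (-((δ' - δ) * n / k))
  have herror_nonneg : 0 ≤ errorConst := by positivity
  refine ⟨max errorConst costConst + 1, by positivity, ?_⟩
  intro m _ lam _ _ htail ε hε _
  constructor
  · calc _ ≤ errorConst * (ε * F) :=
          sqrt_sum_tail_tuckerRank_le m hn0 hk0 hδ hC₀.le hF hγpos hε htail
      _ ≤ (max errorConst costConst + 1) * (ε * F) := by
          gcongr
          linarith [le_max_left errorConst costConst]
      _ = _ := by ring
  · calc _ ≤ costConst * ε ^ (-(n : ℝ) / k) :=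
          log_prod_tuckerRank_le m hn0 hk0 hδ' hcγ.le hγpos hγ hε
      _ ≤ _ := by
          gcongr
          linarith [le_max_right errorConst costConst]
end
end
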